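/- Min-capacity is additive under parallel composition with distinct inputs: C_∞(C₁ × C₂) = C_∞(C₁) + C_∞(C₂), where C_∞(C) = sup over priors π of I_∞(π, C). (In particular, C_∞(C) is attained at the uniform prior and equals log Σ_y max_x C[x,y].) -/

import Mathlib

/-!
For any prior `π`, each column satisfies `max_x π x * C x y ≤ (max π) * max_x C x y`, so
`V(π, C) / V(π) ≤ ∑_y max_x C x y`, with equality for the uniform prior. Hence
`C_∞(C) = log ∑_y max_x C x y`. Column maxima of the product of two nonnegative channels are
products of column maxima, so this sum is multiplicative under parallel composition and its
logarithm is additive.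
-/

open Finset

namespace QIF12

/-- Prior vulnerability. -/
noncomputable def Vmax {X : Type*} [Fintype X] [Nonempty X] (π : X → ℝ) : ℝ :=
  Finset.univ.sup' Finset.univ_nonempty π

/-- Posterior vulnerability. -/
noncomputable def Vpost {X Y : Type*} [Fintype X] [Fintype Y] [Nonempty X]
    (π : X → ℝ) (C : X → Y → ℝ) : ℝ :=
  ∑ y, Finset.univ.sup' Finset.univ_nonempty fun x => π x * C x y

/-- Min-entropy leakage (in bits). -/
noncomputable def Iinf {X Y : Type*} [Fintype X] [Fintype Y] [Nonempty X]
    (π : X → ℝ) (C : X → Y → ℝ) : ℝ :=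
  Real.logb 2 (Vpost π C / Vmax π)

/-- The type of probability distributions on `X`. -/
def Dist (X : Type*) [Fintype X] : Type _ :=
  { π : X → ℝ // (∀ x, 0 ≤ π x) ∧ ∑ x, π x = 1 }

/-- Min-capacity `C_∞(C) = sup_π I_∞(π, C)`. -/
noncomputable def minCap {X Y : Type*} [Fintype X] [Fintype Y] [Nonempty X]
    (C : X → Y → ℝ) : ℝ :=
  ⨆ π : Dist X, Iinf π.1 C

noncomputable def parC {X₁ X₂ Y₁ Y₂ : Type*}
    (C₁ : X₁ → Y₁ → ℝ) (C₂ : X₂ → Y₂ → ℝ) : X₁ × X₂ → Y₁ × Y₂ → ℝ :=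
  fun p q => C₁ p.1 q.1 * C₂ p.2 q.2

lemma _root_.Finset.sup'_mul_sup' {ι κ : Type*} {s : Finset ι} {t : Finset κ}
    (hs : s.Nonempty) (ht : t.Nonempty) {f : ι → ℝ} {g : κ → ℝ}
    (hf : ∀ i ∈ s, 0 ≤ f i) (hg : 0 ≤ t.sup' ht g) :
    s.sup' hs f * t.sup' ht g = (s ×ˢ t).sup' (hs.product ht) fun p => f p.1 * g p.2 := by
  rw [sup'_product_left, sup'_mul₀ hg]
  exact sup'_congr hs rfl fun i hi => mul₀_sup' (hf i hi) g t ht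

def IsChannel {X Y : Type*} [Fintype Y] (C : X → Y → ℝ) : Prop :=
  (∀ x y, 0 ≤ C x y) ∧ ∀ x, ∑ y, C x y = 1

noncomputable def sumColMax {X Y : Type*} [Fintype X] [Fintype Y] [Nonempty X]
    (C : X → Y → ℝ) : ℝ :=
  ∑ y, univ.sup' univ_nonempty fun x => C x y

lemma one_div_card_pos (X : Type*) [Fintype X] [Nonempty X] : 0 < 1 / (Fintype.card X : ℝ) :=
  one_div_pos.2 (Nat.cast_pos.2 Fintype.card_pos)

noncomputable def Dist.uniform (X : Type*) [Fintype X] [Nonempty X] : Dist X :=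
  ⟨fun _ => 1 / Fintype.card X, fun _ => (one_div_card_pos X).le, by
    rw [sum_const, card_univ, nsmul_eq_mul, mul_one_div_cancel]
    exact Nat.cast_ne_zero.2 Fintype.card_ne_zero⟩

instance (X : Type*) [Fintype X] [Nonempty X] : Nonempty (Dist X) := ⟨Dist.uniform X⟩

section Vulnerability

variable {X Y : Type*} [Fintype X] [Fintype Y] [Nonempty X]

lemma one_le_sumColMax {C : X → Y → ℝ} (hC : ∀ x, ∑ y, C x y = 1) :
    1 ≤ sumColMax C := by
  obtain ⟨x⟩ := ‹Nonempty X›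
  rw [← hC x]
  exact sum_le_sum fun y _ => le_sup' (fun x => C x y) (mem_univ x)

lemma Vmax_pos {π : X → ℝ} (hπ : 0 < ∑ x, π x) : 0 < Vmax π := by
  obtain ⟨x, -, hx⟩ :=
    exists_lt_of_sum_lt (f := fun _ => (0 : ℝ)) (g := π) (by simpa using hπ)
  exact hx.trans_le (le_sup' π (mem_univ x))

lemma Vmax_le_Vpost (π : X → ℝ) {C : X → Y → ℝ} (hC : ∀ x, ∑ y, C x y = 1) :
    Vmax π ≤ Vpost π C := by
  obtain ⟨x, -, hx⟩ := exists_mem_eq_sup' univ_nonempty π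
  rw [Vmax, hx, ← mul_one (π x), ← hC x, mul_sum]
  exact sum_le_sum fun y _ => le_sup' (fun x => π x * C x y) (mem_univ x)

lemma Vpost_le_Vmax_mul_sumColMax {π : X → ℝ} (hπ : 0 ≤ Vmax π) {C : X → Y → ℝ}
    (hC : ∀ x y, 0 ≤ C x y) : Vpost π C ≤ Vmax π * sumColMax C := by
  rw [sumColMax, mul_sum]
  refine sum_le_sum fun y _ => sup'_le _ _ fun x _ => ?_
  exact mul_le_mul (le_sup' π (mem_univ x)) (le_sup' (fun x => C x y) (mem_univ x)) (hC x y) hπ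

lemma Vmax_const (c : ℝ) : Vmax (fun _ : X => c) = c := sup'_const _ c

lemma Vpost_const {c : ℝ} (hc : 0 ≤ c) (C : X → Y → ℝ) :
    Vpost (fun _ => c) C = c * sumColMax C := by
  rw [Vpost, sumColMax, mul_sum]
  exact sum_congr rfl fun y _ => (mul₀_sup' hc _ _ _).symm

lemma Iinf_le_logb_sumColMax {π : X → ℝ} (hπ : 0 < ∑ x, π x) {C : X → Y → ℝ}
    (hC : IsChannel C) : Iinf π C ≤ Real.logb 2 (sumColMax C) := by
  have hV := Vmax_pos hπ
  refine Real.logb_le_logb_of_le (by norm_num)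
    (div_pos (hV.trans_le (Vmax_le_Vpost π hC.2)) hV) ?_
  rw [div_le_iff₀ hV, mul_comm]
  exact Vpost_le_Vmax_mul_sumColMax hV.le hC.1

lemma Iinf_const {c : ℝ} (hc : 0 < c) (C : X → Y → ℝ) :
    Iinf (fun _ => c) C = Real.logb 2 (sumColMax C) := by
  rw [Iinf, Vpost_const hc.le, Vmax_const, mul_div_cancel_left₀ _ hc.ne']

lemma minCap_eq_logb_sumColMax {C : X → Y → ℝ} (hC : IsChannel C) :
    minCap C = Real.logb 2 (sumColMax C) := by
  have hle (π : Dist X) : Iinf π.1 C ≤ Real.logb 2 (sumColMax C) :=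
    Iinf_le_logb_sumColMax (by rw [π.2.2]; exact one_pos) hC
  refine le_antisymm (ciSup_le hle) ?_
  rw [← Iinf_const (one_div_card_pos X)]
  exact le_ciSup ⟨_, Set.forall_mem_range.2 hle⟩ (Dist.uniform X)

end Vulnerability

section Parallel

variable {X₁ X₂ Y₁ Y₂ : Type*} [Fintype Y₁] [Fintype Y₂]
  {C₁ : X₁ → Y₁ → ℝ} {C₂ : X₂ → Y₂ → ℝ}

lemma IsChannel.parC (h₁ : IsChannel C₁) (h₂ : IsChannel C₂) : IsChannel (parC C₁ C₂) :=
  ⟨fun x y => mul_nonneg (h₁.1 _ _) (h₂.1 _ _), fun x => by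
    simp only [QIF12.parC, Fintype.sum_prod_type, ← sum_mul_sum, h₁.2, h₂.2, mul_one]⟩

lemma sumColMax_parC [Fintype X₁] [Fintype X₂] [Nonempty X₁] [Nonempty X₂]
    (h₁ : ∀ x y, 0 ≤ C₁ x y) (h₂ : ∀ x y, 0 ≤ C₂ x y) :
    sumColMax (parC C₁ C₂) = sumColMax C₁ * sumColMax C₂ := by
  rw [sumColMax, Fintype.sum_prod_type, sumColMax, sumColMax, sum_mul_sum]
  refine sum_congr rfl fun y₁ _ => sum_congr rfl fun y₂ _ => ?_
  obtain ⟨x₂⟩ := ‹Nonempty X₂›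
  rw [Finset.sup'_mul_sup' _ _ (fun x _ => h₁ x y₁)
    (le_sup'_of_le _ (mem_univ x₂) (h₂ x₂ y₂))]
  exact sup'_congr _ univ_product_univ fun _ _ => rfl

end Parallel

/-- Min-capacity is additive under parallel composition with distinct inputs;
moreover it is attained at the uniform prior and equals `log ∑_y max_x C[x,y]`. -/
theorem min_capacity_parallel_additive {X₁ X₂ Y₁ Y₂ : Type*}
    [Fintype X₁] [Fintype X₂] [Fintype Y₁] [Fintype Y₂]
    [Nonempty X₁] [Nonempty X₂]
    (C₁ : X₁ → Y₁ → ℝ) (C₂ : X₂ → Y₂ → ℝ)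
    (hC₁0 : ∀ x y, 0 ≤ C₁ x y) (hC₁1 : ∀ x, ∑ y, C₁ x y = 1)
    (hC₂0 : ∀ x y, 0 ≤ C₂ x y) (hC₂1 : ∀ x, ∑ y, C₂ x y = 1) :
    minCap (parC C₁ C₂) = minCap C₁ + minCap C₂
      ∧ minCap C₁ = Iinf (fun _ : X₁ => (1 : ℝ) / Fintype.card X₁) C₁
      ∧ minCap C₁
          = Real.logb 2
            (∑ y, Finset.univ.sup' Finset.univ_nonempty fun x => C₁ x y) := by
  have h₁ : IsChannel C₁ := ⟨hC₁0, hC₁1⟩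
  have h₂ : IsChannel C₂ := ⟨hC₂0, hC₂1⟩
  have hS₁ := (one_le_sumColMax hC₁1).trans_lt' one_pos
  have hS₂ := (one_le_sumColMax hC₂1).trans_lt' one_pos
  refine ⟨?_, ?_, minCap_eq_logb_sumColMax h₁⟩
  · rw [minCap_eq_logb_sumColMax (h₁.parC h₂), sumColMax_parC hC₁0 hC₂0,
      Real.logb_mul hS₁.ne' hS₂.ne', minCap_eq_logb_sumColMax h₁,
      minCap_eq_logb_sumColMax h₂]
  · rw [Iinf_const (one_div_card_pos X₁), minCap_eq_logb_sumColMax h₁]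

end QIF12
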